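/- arXiv:2311.03400 — 2 statements merged into one kernel-verified Lean document; each statement's English description precedes it below -/
import Mathlib

section
/- Let G = (V, E, γ) be a labeled directed graph and M = (V', E', γ') a motif that is connected and has at least 3 vertices. If W₁ and W₂ are non-overlapping sets of embeddings of M in G with W₁ ≠ W₂, then φ(W₁) ≠ φ(W₂); that is, the edge-decomposition map φ is injective on non-overlapping embedding sets of M in G. -/
/-- The vertex set (set of endpoints) of an edge set `Λ` in a directed graph. -/
def endpts {V : Type*} (Λ : Set (V × V)) : Set V :=
  {v | ∃ e ∈ Λ, e.1 = v ∨ e.2 = v}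

/-- The edge-induced subgraph `G[Λ]` (edges `Λ`, labels `γ`) is isomorphic to the
motif `M = (V', E', γ')`. -/
def IsoToMotif {V V' : Type*} (γ : V × V → Bool) (Λ : Set (V × V))
    (E' : Set (V' × V')) (γ' : V' × V' → Bool) : Prop :=
  ∃ g : ↥(endpts Λ) ≃ V',
    (∀ u v : ↥(endpts Λ), ((u : V), (v : V)) ∈ Λ ↔ (g u, g v) ∈ E') ∧
    (∀ u v : ↥(endpts Λ), ((u : V), (v : V)) ∈ Λ → γ ((u : V), (v : V)) = γ' (g u, g v))

/-- `Λ` is an embedding of the motif `M = (V', E', γ')` in the graph `G = (V, E, γ)`. -/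
def IsEmbedding {V V' : Type*} (E : Set (V × V)) (γ : V × V → Bool)
    (E' : Set (V' × V')) (γ' : V' × V' → Bool) (Λ : Set (V × V)) : Prop :=
  Λ ⊆ E ∧ IsoToMotif γ Λ E' γ'

/-- `W` is a non-overlapping set of embeddings of `M` in `G`. -/
def NonOverlappingSet {V V' : Type*} (E : Set (V × V)) (γ : V × V → Bool)
    (E' : Set (V' × V')) (γ' : V' × V' → Bool) (W : Set (Set (V × V))) : Prop :=
  (∀ Λ ∈ W, IsEmbedding E γ E' γ' Λ) ∧
  W.Pairwise fun Λ₁ Λ₂ => Disjoint (endpts Λ₁) (endpts Λ₂)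

/-- The edge decomposition `φ(W) = ⋃_{Λ ∈ W} Λ`. -/
def edgeDecomp {V : Type*} (W : Set (Set (V × V))) : Set (V × V) := ⋃₀ W

/-- The motif (as a labeled directed graph on the whole vertex type `V'`) is connected,
i.e. the undirected graph obtained by forgetting directions and labels is connected. -/
def MotifConnected {V' : Type*} (E' : Set (V' × V')) : Prop :=
  (SimpleGraph.fromRel fun a b => (a, b) ∈ E' ∨ (b, a) ∈ E').Connected

/-!
The undirected graph underlying an embedding `Λ` is isomorphic to the motif's, hence connected,
and `Λ` has an edge. If `Λ ⊆ φ(W)` for a non-overlapping `W`, the member of `W` containing one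
edge of `Λ` owns every endpoint reachable from it, hence all of `Λ`. So `φ(W₁) = φ(W₂)` puts each
`Λ ∈ W₁` inside some `Λ' ∈ W₂`, and `Λ'` inside a member of `W₁`, which shares an edge with `Λ`
and therefore is `Λ`; thus `Λ = Λ'`.
-/

section

variable {V V' : Type*}

/-- `MotifConnected E'` is `(underlyingGraph E').Connected` by definition. -/
def underlyingGraph (Λ : Set (V × V)) : SimpleGraph V :=
  SimpleGraph.fromRel fun a b => (a, b) ∈ Λ ∨ (b, a) ∈ Λ

lemma fst_mem_endpts {Λ : Set (V × V)} {e : V × V} (he : e ∈ Λ) : e.1 ∈ endpts Λ :=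
  ⟨e, he, Or.inl rfl⟩

lemma snd_mem_endpts {Λ : Set (V × V)} {e : V × V} (he : e ∈ Λ) : e.2 ∈ endpts Λ :=
  ⟨e, he, Or.inr rfl⟩

lemma SimpleGraph.Reachable.mem_of_adj_closed {G : SimpleGraph V} {s : Set V}
    (hs : ∀ u v, G.Adj u v → u ∈ s → v ∈ s) {u v : V} (huv : G.Reachable u v) (hu : u ∈ s) :
    v ∈ s := by
  rw [SimpleGraph.reachable_iff_reflTransGen] at huv
  induction huv with
  | refl => exact hu
  | tail _ hadj ih => exact hs _ _ hadj ih

namespace IsoToMotif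

variable {γ : V × V → Bool} {Λ : Set (V × V)} {E' : Set (V' × V')} {γ' : V' × V' → Bool}

lemma nonempty [Nonempty V'] (h : IsoToMotif γ Λ E' γ') : Λ.Nonempty := by
  obtain ⟨g, -, -⟩ := h
  obtain ⟨_, e, he, -⟩ := g.symm (Classical.arbitrary V')
  exact ⟨e, he⟩

lemma reachable (h : IsoToMotif γ Λ E' γ') (hconn : MotifConnected E') {u v : V}
    (hu : u ∈ endpts Λ) (hv : v ∈ endpts Λ) : (underlyingGraph Λ).Reachable u v := by
  obtain ⟨g, hg, -⟩ := h
  let f : underlyingGraph E' →g underlyingGraph Λ :=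
    { toFun := fun x => g.symm x
      map_rel' := fun {a b} hab => by
        have hinj : Function.Injective fun x => (g.symm x : V) :=
          Subtype.val_injective.comp g.symm.injective
        have hedge : ∀ x y, (x, y) ∈ E' ↔ ((g.symm x : V), (g.symm y : V)) ∈ Λ := fun x y => by
          simpa using (hg (g.symm x) (g.symm y)).symm
        simp only [underlyingGraph, SimpleGraph.fromRel_adj, hedge] at hab ⊢
        exact ⟨hinj.ne hab.1, hab.2⟩ }
  simpa [f] using (hconn.preconnected (g ⟨u, hu⟩) (g ⟨v, hv⟩)).map f

end IsoToMotif

section PairwiseDisjoint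

variable {W : Set (Set (V × V))}

lemma exists_mem_superset_of_reachable (hW : W.PairwiseDisjoint endpts) {Λ : Set (V × V)}
    (hΛ : Λ.Nonempty)
    (hreach : ∀ u ∈ endpts Λ, ∀ v ∈ endpts Λ, (underlyingGraph Λ).Reachable u v)
    (hsub : Λ ⊆ ⋃₀ W) : ∃ m ∈ W, Λ ⊆ m := by
  obtain ⟨e₀, he₀⟩ := hΛ
  obtain ⟨m₀, hm₀, he₀m₀⟩ := hsub he₀
  have hedge : ∀ e ∈ Λ, e.1 ∈ endpts m₀ ∨ e.2 ∈ endpts m₀ → e ∈ m₀ := by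
    intro e he hm₀e
    obtain ⟨m, hm, hem⟩ := hsub he
    obtain rfl : m = m₀ := hm₀e.elim (hW.elim_set hm hm₀ _ (fst_mem_endpts hem))
      (hW.elim_set hm hm₀ _ (snd_mem_endpts hem))
    exact hem
  have hclosed : ∀ u v, (underlyingGraph Λ).Adj u v → u ∈ endpts m₀ → v ∈ endpts m₀ := by
    rintro u v ⟨-, hadj⟩ hu
    obtain huv | hvu : (u, v) ∈ Λ ∨ (v, u) ∈ Λ := by tauto
    · exact snd_mem_endpts (hedge (u, v) huv (.inl hu))
    · exact fst_mem_endpts (hedge (v, u) hvu (.inr hu))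
  refine ⟨m₀, hm₀, fun e he => hedge e he (.inl ?_)⟩
  exact (hreach _ (fst_mem_endpts he₀) _ (fst_mem_endpts he)).mem_of_adj_closed hclosed
    (fst_mem_endpts he₀m₀)

lemma eq_of_subset_of_mem (hW : W.PairwiseDisjoint endpts) {Λ Λ' : Set (V × V)} (hΛ : Λ ∈ W)
    (hΛ' : Λ' ∈ W) (hne : Λ.Nonempty) (hsub : Λ ⊆ Λ') : Λ = Λ' := by
  obtain ⟨e, he⟩ := hne
  exact hW.elim_set hΛ hΛ' e.1 (fst_mem_endpts he) (fst_mem_endpts (hsub he))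

end PairwiseDisjoint

namespace NonOverlappingSet

variable {E : Set (V × V)} {γ : V × V → Bool} {E' : Set (V' × V')} {γ' : V' × V' → Bool}
  {W W' : Set (Set (V × V))}

lemma exists_mem_superset (hconn : MotifConnected E') (hW : NonOverlappingSet E γ E' γ' W)
    {Λ : Set (V × V)} (hΛ : IsoToMotif γ Λ E' γ') (hsub : Λ ⊆ edgeDecomp W) :
    ∃ m ∈ W, Λ ⊆ m :=
  have := hconn.nonempty
  exists_mem_superset_of_reachable hW.2 hΛ.nonempty (fun _ hu _ hv => hΛ.reachable hconn hu hv)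
    hsub

lemma subset_of_edgeDecomp_eq (hconn : MotifConnected E') (hW : NonOverlappingSet E γ E' γ' W)
    (hW' : NonOverlappingSet E γ E' γ' W') (h : edgeDecomp W = edgeDecomp W') : W ⊆ W' := by
  intro Λ hΛ
  have hΛiso := (hW.1 Λ hΛ).2
  obtain ⟨m, hm, hΛm⟩ :=
    hW'.exists_mem_superset hconn hΛiso (h ▸ Set.subset_sUnion_of_mem hΛ)
  obtain ⟨Λ'', hΛ'', hmΛ''⟩ :=
    hW.exists_mem_superset hconn (hW'.1 m hm).2 (h ▸ Set.subset_sUnion_of_mem hm)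
  have := hconn.nonempty
  obtain rfl := eq_of_subset_of_mem hW.2 hΛ hΛ'' hΛiso.nonempty (hΛm.trans hmΛ'')
  rwa [hΛm.antisymm hmΛ'']

end NonOverlappingSet

end

theorem stmt0_general {V V' : Type*}
    (E : Set (V × V)) (γ : V × V → Bool)
    (E' : Set (V' × V')) (γ' : V' × V' → Bool)
    (hconn : MotifConnected E')
    (W₁ W₂ : Set (Set (V × V)))
    (h₁ : NonOverlappingSet E γ E' γ' W₁) (h₂ : NonOverlappingSet E γ E' γ' W₂)
    (hne : W₁ ≠ W₂) :
    edgeDecomp W₁ ≠ edgeDecomp W₂ := fun h =>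
  hne <| (h₁.subset_of_edgeDecomp_eq hconn h₂ h).antisymm
    (h₂.subset_of_edgeDecomp_eq hconn h₁ h.symm)

theorem stmt0 {V V' : Type*} [Fintype V] [Fintype V']
    (E : Set (V × V)) (γ : V × V → Bool)
    (E' : Set (V' × V')) (γ' : V' × V' → Bool)
    (hconn : MotifConnected E') (hcard : 3 ≤ Fintype.card V')
    (W₁ W₂ : Set (Set (V × V)))
    (h₁ : NonOverlappingSet E γ E' γ' W₁) (h₂ : NonOverlappingSet E γ E' γ' W₂)
    (hne : W₁ ≠ W₂) :
    edgeDecomp W₁ ≠ edgeDecomp W₂ :=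
  stmt0_general E γ E' γ' hconn W₁ W₂ h₁ h₂ hne
end

section
/- Let G = (V, E, γ) be a labeled directed graph and M = (V', E', γ') a motif that is connected and has at least 3 vertices. If an edge set 𝓔 ⊆ E satisfies Property 1 (with uniqueness) and Property 2, then there exists exactly one non-overlapping set W of embeddings of M in G with φ(W) = 𝓔. -/
/-- Property 1 (with uniqueness): every edge of `𝓔` lies in exactly one edge set
`Λ ⊆ 𝓔` whose induced subgraph is isomorphic to the motif. -/
def Property1 {V V' : Type*} (γ : V × V → Bool) (E' : Set (V' × V'))
    (γ' : V' × V' → Bool) (𝓔 : Set (V × V)) : Prop :=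
  ∀ e ∈ 𝓔, ∃! Λ : Set (V × V), e ∈ Λ ∧ Λ ⊆ 𝓔 ∧ IsoToMotif γ Λ E' γ'

/-- Property 2: any two edges of `𝓔` sharing a vertex lie in a common edge set
`Λ ⊆ 𝓔` whose induced subgraph is isomorphic to the motif. -/
def Property2 {V V' : Type*} (γ : V × V → Bool) (E' : Set (V' × V'))
    (γ' : V' × V' → Bool) (𝓔 : Set (V × V)) : Prop :=
  ∀ e₁ ∈ 𝓔, ∀ e₂ ∈ 𝓔, (({e₁.1, e₁.2} : Set V) ∩ {e₂.1, e₂.2}).Nonempty →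
    ∃ Λ : Set (V × V), Λ ⊆ 𝓔 ∧ e₁ ∈ Λ ∧ e₂ ∈ Λ ∧ IsoToMotif γ Λ E' γ'

/-!
Any admissible `W` must consist of copies of the motif inside `𝓔`, and by Property 1 each such
copy is the unique one through any of its edges (it has one, since the motif has a vertex), so
`W` is the set of *all* copies of the motif inside `𝓔`. Conversely that set covers `𝓔` by
Property 1, and two of its members sharing a vertex have edges through that vertex which, by
Property 2, lie in a common copy; uniqueness in Property 1 then identifies both members with
that copy.
-/

def motifCopies {V V' : Type*} (γ : V × V → Bool) (E' : Set (V' × V'))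
    (γ' : V' × V' → Bool) (𝓔 : Set (V × V)) : Set (Set (V × V)) :=
  {Λ | Λ ⊆ 𝓔 ∧ IsoToMotif γ Λ E' γ'}

section

variable {V V' : Type*} {γ : V × V → Bool} {E' : Set (V' × V')} {γ' : V' × V' → Bool}
  {𝓔 : Set (V × V)}

theorem IsoToMotif.nonempty_s2 [Nonempty V'] {Λ : Set (V × V)} (h : IsoToMotif γ Λ E' γ') :
    Λ.Nonempty := by
  obtain ⟨g, -, -⟩ := h
  obtain ⟨e, he, -⟩ := (g.symm (Classical.arbitrary V')).2
  exact ⟨e, he⟩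

theorem edges_inter_nonempty_of_mem_endpts {v : V} {e₁ e₂ : V × V}
    (h₁ : e₁.1 = v ∨ e₁.2 = v) (h₂ : e₂.1 = v ∨ e₂.2 = v) :
    (({e₁.1, e₁.2} : Set V) ∩ {e₂.1, e₂.2}).Nonempty :=
  ⟨v, by rcases h₁ with h | h <;> simp [h], by rcases h₂ with h | h <;> simp [h]⟩

namespace Property1

variable (h1 : Property1 γ E' γ' 𝓔)
include h1

theorem eq_of_mem_motifCopies {e : V × V} {Λ₁ Λ₂ : Set (V × V)}
    (hΛ₁ : Λ₁ ∈ motifCopies γ E' γ' 𝓔) (hΛ₂ : Λ₂ ∈ motifCopies γ E' γ' 𝓔)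
    (he₁ : e ∈ Λ₁) (he₂ : e ∈ Λ₂) : Λ₁ = Λ₂ :=
  (h1 e (hΛ₁.1 he₁)).unique ⟨he₁, hΛ₁⟩ ⟨he₂, hΛ₂⟩

theorem edgeDecomp_motifCopies : edgeDecomp (motifCopies γ E' γ' 𝓔) = 𝓔 := by
  refine Set.Subset.antisymm (Set.sUnion_subset fun Λ hΛ => hΛ.1) fun e he => ?_
  obtain ⟨Λ, ⟨heΛ, hΛ⟩, -⟩ := h1 e he
  exact ⟨Λ, hΛ, heΛ⟩

theorem pairwise_disjoint_endpts_motifCopies (h2 : Property2 γ E' γ' 𝓔) :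
    (motifCopies γ E' γ' 𝓔).Pairwise fun Λ₁ Λ₂ => Disjoint (endpts Λ₁) (endpts Λ₂) := by
  intro Λ₁ hΛ₁ Λ₂ hΛ₂ hne
  refine Set.disjoint_left.mpr ?_
  rintro v ⟨e₁, he₁, hv₁⟩ ⟨e₂, he₂, hv₂⟩
  obtain ⟨Λ, hΛ𝓔, he₁Λ, he₂Λ, hΛ⟩ := h2 e₁ (hΛ₁.1 he₁) e₂ (hΛ₂.1 he₂)
    (edges_inter_nonempty_of_mem_endpts hv₁ hv₂)
  exact hne <| (h1.eq_of_mem_motifCopies hΛ₁ ⟨hΛ𝓔, hΛ⟩ he₁ he₁Λ).trans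
    (h1.eq_of_mem_motifCopies hΛ₂ ⟨hΛ𝓔, hΛ⟩ he₂ he₂Λ).symm

theorem eq_motifCopies_of_edgeDecomp_eq [Nonempty V'] {W : Set (Set (V × V))}
    (hW : ∀ Λ ∈ W, IsoToMotif γ Λ E' γ') (hdec : edgeDecomp W = 𝓔) :
    W = motifCopies γ E' γ' 𝓔 := by
  have hsub : ∀ Λ ∈ W, Λ ⊆ 𝓔 := fun Λ hΛ => hdec ▸ Set.subset_sUnion_of_mem hΛ
  ext Λ
  refine ⟨fun hΛ => ⟨hsub Λ hΛ, hW Λ hΛ⟩, fun hΛ => ?_⟩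
  obtain ⟨e, he⟩ := hΛ.2.nonempty_s2
  obtain ⟨Λ', hΛ'W, heΛ'⟩ : e ∈ edgeDecomp W := hdec ▸ hΛ.1 he
  rwa [h1.eq_of_mem_motifCopies hΛ ⟨hsub Λ' hΛ'W, hW Λ' hΛ'W⟩ he heΛ']

end Property1

end

theorem stmt2_general {V V' : Type*} [Fintype V']
    (E : Set (V × V)) (γ : V × V → Bool)
    (E' : Set (V' × V')) (γ' : V' × V' → Bool)
    (hcard : 3 ≤ Fintype.card V')
    (𝓔 : Set (V × V)) (h𝓔 : 𝓔 ⊆ E)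
    (h1 : Property1 γ E' γ' 𝓔) (h2 : Property2 γ E' γ' 𝓔) :
    ∃! W : Set (Set (V × V)), NonOverlappingSet E γ E' γ' W ∧ edgeDecomp W = 𝓔 := by
  have : Nonempty V' := Fintype.card_pos_iff.mp (by omega)
  refine ⟨motifCopies γ E' γ' 𝓔, ⟨⟨fun Λ hΛ => ⟨hΛ.1.trans h𝓔, hΛ.2⟩,
    h1.pairwise_disjoint_endpts_motifCopies h2⟩, h1.edgeDecomp_motifCopies⟩, ?_⟩
  rintro W ⟨⟨hemb, -⟩, hdec⟩
  exact h1.eq_motifCopies_of_edgeDecomp_eq (fun Λ hΛ => (hemb Λ hΛ).2) hdec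

theorem stmt2 {V V' : Type*} [Fintype V] [Fintype V']
    (E : Set (V × V)) (γ : V × V → Bool)
    (E' : Set (V' × V')) (γ' : V' × V' → Bool)
    (hconn : MotifConnected E') (hcard : 3 ≤ Fintype.card V')
    (𝓔 : Set (V × V)) (h𝓔 : 𝓔 ⊆ E)
    (h1 : Property1 γ E' γ' 𝓔) (h2 : Property2 γ E' γ' 𝓔) :
    ∃! W : Set (Set (V × V)), NonOverlappingSet E γ E' γ' W ∧ edgeDecomp W = 𝓔 :=
  stmt2_general E γ E' γ' hcard 𝓔 h𝓔 h1 h2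
end
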